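/- (Poincaré card shuffling / random walk on a finite group) Let G be a finite group and μ a probability measure on G whose support generates G and is not contained in a coset of a proper normal subgroup (equivalently, the walk is irreducible and aperiodic). Then the n-fold convolution μ^{*n} converges to the uniform distribution on G as n → ∞. -/

import Mathlib

open Filter Topology

/-- `n`-fold convolution power of a probability mass function on a finite group. -/
def convPow {G : Type*} [Group G] [Fintype G] [DecidableEq G]
    (μ : G → ℝ) : ℕ → G → ℝ
  | 0 => fun g => if g = 1 then 1 else 0
  | n + 1 => fun g => ∑ h, μ h * convPow μ n (h⁻¹ * g)

/-!
Every element of `G` is reached by the walk at some time, since the support of `μ` generates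
the finite group `G`. The return times to `1` form an additive submonoid of `ℕ`; let `d` be
its gcd, the period. The times at which a given `g` is reached are all congruent mod `d`, so
`g ↦ (time mod d)` is a homomorphism `G → ℤ/d`. The support of `μ` lies in the fibre over `1`,
a coset of the normal kernel, so the kernel is `G` and `d = 1`. Hence every large time is a
return time and some `μ^{*N}` is bounded below by `ε > 0`. Doeblin's coupling argument then
gives `‖μ^{*(N+n)} - U‖_∞ ≤ (1 - |G| ε) ‖μ^{*n} - U‖_∞`, so `μ^{*n} → U` geometrically.
-/

section RandomWalk

variable {G : Type*} [Group G] [Fintype G] [DecidableEq G] {μ : G → ℝ}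

theorem convPow_succ (μ : G → ℝ) (n : ℕ) (g : G) :
    convPow μ (n + 1) g = ∑ h, μ h * convPow μ n (h⁻¹ * g) := rfl

theorem convPow_one (μ : G → ℝ) (g : G) : convPow μ 1 g = μ g := by
  rw [convPow_succ, Finset.sum_eq_single g] <;> simp +contextual [convPow, inv_mul_eq_one]

theorem convPow_add (μ : G → ℝ) :
    ∀ (m n : ℕ) (g : G), convPow μ (m + n) g = ∑ h, convPow μ m h * convPow μ n (h⁻¹ * g)
  | 0, n, g => by
    rw [zero_add, Finset.sum_eq_single 1] <;> simp +contextual [convPow]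
  | m + 1, n, g => by
    rw [add_right_comm, convPow_succ]
    simp only [convPow_add μ m n, convPow_succ, Finset.mul_sum, Finset.sum_mul]
    conv_rhs => rw [Finset.sum_comm]
    refine Finset.sum_congr rfl fun a _ => Fintype.sum_equiv (Equiv.mulLeft a) _ _ fun b => ?_
    simp only [Equiv.coe_mulLeft, mul_inv_rev, inv_mul_cancel_left, mul_assoc]

theorem sum_convPow (hsum : ∑ g, μ g = 1) : ∀ n : ℕ, ∑ g, convPow μ n g = 1
  | 0 => by simp [convPow]
  | n + 1 => by
    have hshift (a : G) : ∑ g, convPow μ n (a * g) = 1 :=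
      (Equiv.sum_comp (Equiv.mulLeft a) _).trans (sum_convPow hsum n)
    simp only [convPow_succ]
    rw [Finset.sum_comm]
    simp only [← Finset.mul_sum, hshift, mul_one, hsum]

section Positivity

variable (hμ : ∀ g, 0 ≤ μ g)
include hμ

theorem convPow_nonneg : ∀ (n : ℕ) (g : G), 0 ≤ convPow μ n g
  | 0, g => by simp only [convPow]; split <;> norm_num
  | n + 1, _ => Finset.sum_nonneg fun h _ => mul_nonneg (hμ h) (convPow_nonneg n _)

theorem convPow_le_one (hsum : ∑ g, μ g = 1) (n : ℕ) (g : G) : convPow μ n g ≤ 1 :=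
  sum_convPow hsum n ▸
    Finset.single_le_sum (fun h _ => convPow_nonneg hμ n h) (Finset.mem_univ g)

theorem convPow_add_pos {m n : ℕ} {a b : G} (ha : 0 < convPow μ m a) (hb : 0 < convPow μ n b) :
    0 < convPow μ (m + n) (a * b) := by
  rw [convPow_add]
  refine Finset.sum_pos' (fun h _ => mul_nonneg (convPow_nonneg hμ m h) (convPow_nonneg hμ n _))
    ⟨a, Finset.mem_univ a, ?_⟩
  rw [inv_mul_cancel_left]
  exact mul_pos ha hb

def reachable : Submonoid G where
  carrier := {g | ∃ n, 0 < convPow μ n g}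
  one_mem' := ⟨0, by simp [convPow]⟩
  mul_mem' := fun ⟨_, ha⟩ ⟨_, hb⟩ => ⟨_, convPow_add_pos hμ ha hb⟩

def returnTimes : AddSubmonoid ℕ where
  carrier := {n | 0 < convPow μ n 1}
  zero_mem' := by simp [convPow]
  add_mem' ha hb := by simpa using convPow_add_pos hμ ha hb

theorem exists_convPow_pos (hgen : Subgroup.closure (Function.support μ) = ⊤) (g : G) :
    ∃ n, 0 < convPow μ n g := by
  have hle : Submonoid.closure (Function.support μ) ≤ reachable hμ :=
    Submonoid.closure_le.2 fun s hs => ⟨1, by rw [convPow_one]; exact (hμ s).lt_of_ne' hs⟩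
  rw [← Subgroup.closure_toSubmonoid_of_finite, hgen] at hle
  exact hle (Subgroup.mem_top g)

noncomputable def period : ℕ := Nat.setGcd (returnTimes hμ)

variable (hreach : ∀ g : G, ∃ n, 0 < convPow μ n g)
include hreach

theorem natCast_eq_of_convPow_pos {m n : ℕ} {g : G} (hm : 0 < convPow μ m g)
    (hn : 0 < convPow μ n g) : (m : ZMod (period hμ)) = n := by
  obtain ⟨k, hk⟩ := hreach g⁻¹
  have hret {i : ℕ} (hi : 0 < convPow μ i g) : (i : ZMod (period hμ)) + k = 0 := by
    have hik : 0 < convPow μ (i + k) 1 := by simpa using convPow_add_pos hμ hi hk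
    exact_mod_cast (ZMod.natCast_eq_zero_iff _ _).2 (Nat.setGcd_dvd_of_mem hik)
  exact add_right_cancel ((hret hm).trans (hret hn).symm)

noncomputable def periodHom : G →* Multiplicative (ZMod (period hμ)) where
  toFun g := .ofAdd ((hreach g).choose : ZMod (period hμ))
  map_one' := by
    simpa using natCast_eq_of_convPow_pos hμ hreach (hreach 1).choose_spec
      (n := 0) (by simp [convPow])
  map_mul' a b := congrArg Multiplicative.ofAdd <| by
    simpa using natCast_eq_of_convPow_pos hμ hreach (hreach (a * b)).choose_spec
      (convPow_add_pos hμ (hreach a).choose_spec (hreach b).choose_spec)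

theorem periodHom_apply {n : ℕ} {g : G} (hg : 0 < convPow μ n g) :
    periodHom hμ hreach g = .ofAdd (n : ZMod (period hμ)) :=
  congrArg Multiplicative.ofAdd (natCast_eq_of_convPow_pos hμ hreach (hreach g).choose_spec hg)

theorem period_eq_one (hsupp : (Function.support μ).Nonempty)
    (hcoset : ¬ ∃ (H : Subgroup G), H.Normal ∧ H ≠ ⊤ ∧
      ∃ g : G, Function.support μ ⊆ (fun h => g * h) '' (H : Set G)) :
    period hμ = 1 := by
  obtain ⟨s, hs⟩ := hsupp
  set φ := periodHom hμ hreach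
  have hφ : ∀ t ∈ Function.support μ, φ t = .ofAdd 1 := fun t ht => by
    simpa using periodHom_apply hμ hreach (n := 1)
      (by rw [convPow_one]; exact (hμ t).lt_of_ne' ht)
  have hker : φ.ker = ⊤ := by
    by_contra hne
    refine hcoset ⟨φ.ker, inferInstance, hne, s, fun t ht => ⟨s⁻¹ * t, ?_, mul_inv_cancel_left s t⟩⟩
    rw [SetLike.mem_coe, MonoidHom.mem_ker, map_mul, map_inv, hφ s hs, hφ t ht, inv_mul_cancel]
  have hs1 : φ s = 1 := MonoidHom.mem_ker.1 (hker ▸ Subgroup.mem_top s)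
  rw [hφ s hs, ofAdd_eq_one, ← Nat.cast_one, ZMod.natCast_eq_zero_iff] at hs1
  exact Nat.dvd_one.1 hs1

theorem eventually_forall_convPow_pos (hperiod : period hμ = 1) :
    ∀ᶠ N in atTop, ∀ g : G, 0 < convPow μ N g := by
  obtain ⟨n₀, hn₀⟩ := Nat.exists_mem_closure_of_ge (returnTimes hμ : Set ℕ)
  choose t ht using hreach
  refine eventually_atTop.2 ⟨n₀ + Finset.univ.sup t, fun N hN g => ?_⟩
  have htg : t g ≤ Finset.univ.sup t := Finset.le_sup (Finset.mem_univ g)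
  have hret : N - t g ∈ returnTimes hμ := by
    simpa using hn₀ (N - t g) (by omega) (by rw [← period, hperiod]; exact one_dvd _)
  simpa [Nat.add_sub_cancel' (show t g ≤ N by omega)] using convPow_add_pos hμ (ht g) hret

end Positivity

omit [DecidableEq G] in
theorem abs_conv_sub_inv_card_le (ν f : G → ℝ) {ε c : ℝ} (hε : ∀ h, ε ≤ ν h)
    (hν : ∑ h, ν h = 1) (hf : ∑ g, f g = 1) (hc : ∀ g, |f g - (Fintype.card G : ℝ)⁻¹| ≤ c)
    (x : G) :
    |∑ h, ν h * f (h⁻¹ * x) - (Fintype.card G : ℝ)⁻¹| ≤ (1 - Fintype.card G * ε) * c := by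
  set u := (Fintype.card G : ℝ)⁻¹
  have hfx : ∑ h, f (h⁻¹ * x) = 1 := by
    rw [← hf]
    exact Fintype.sum_equiv ((Equiv.inv G).trans (Equiv.mulRight x)) _ _ fun _ => rfl
  -- subtracting the constant `ε` from `ν` does not change the left side, as `∑ f = |G| u`
  have hcouple : ∑ h, ν h * f (h⁻¹ * x) - u = ∑ h, (ν h - ε) * (f (h⁻¹ * x) - u) := by
    have hcard : (Fintype.card G : ℝ) ≠ 0 := Nat.cast_ne_zero.2 Fintype.card_ne_zero
    simp only [sub_mul, mul_sub, Finset.sum_sub_distrib, ← Finset.mul_sum, ← Finset.sum_mul,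
      hν, hfx, Finset.sum_const, Finset.card_univ, nsmul_eq_mul, u]
    field_simp
    ring
  calc |∑ h, ν h * f (h⁻¹ * x) - u|
      = |∑ h, (ν h - ε) * (f (h⁻¹ * x) - u)| := by rw [hcouple]
    _ ≤ ∑ h, |(ν h - ε) * (f (h⁻¹ * x) - u)| := Finset.abs_sum_le_sum_abs _ _
    _ ≤ ∑ h, (ν h - ε) * c := Finset.sum_le_sum fun h _ => by
        rw [abs_mul, abs_of_nonneg (sub_nonneg.2 (hε h))]
        exact mul_le_mul_of_nonneg_left (hc _) (sub_nonneg.2 (hε h))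
    _ = (1 - Fintype.card G * ε) * c := by
        rw [← Finset.sum_mul, Finset.sum_sub_distrib, hν, Finset.sum_const, Finset.card_univ,
          nsmul_eq_mul]

section Convergence

variable (hμ : ∀ g, 0 ≤ μ g) (hsum : ∑ g, μ g = 1)
include hμ hsum

theorem abs_convPow_sub_inv_card_le_one (n : ℕ) (g : G) :
    |convPow μ n g - (Fintype.card G : ℝ)⁻¹| ≤ 1 := by
  have hu : (Fintype.card G : ℝ)⁻¹ ≤ 1 := inv_le_one_of_one_le₀ (by exact_mod_cast Fintype.card_pos)
  have hu' : 0 ≤ (Fintype.card G : ℝ)⁻¹ := by positivity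
  have := convPow_nonneg hμ n g
  have := convPow_le_one hμ hsum n g
  exact abs_sub_le_iff.2 ⟨by linarith, by linarith⟩

theorem abs_convPow_sub_inv_card_le_pow {N : ℕ} {ε : ℝ} (hε : ∀ h, ε ≤ convPow μ N h)
    (k j : ℕ) (g : G) :
    |convPow μ (N * k + j) g - (Fintype.card G : ℝ)⁻¹| ≤ (1 - Fintype.card G * ε) ^ k := by
  induction k generalizing g with
  | zero => simpa using abs_convPow_sub_inv_card_le_one hμ hsum j g
  | succ k ih =>
    rw [show N * (k + 1) + j = N + (N * k + j) by ring, convPow_add, pow_succ']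
    exact abs_conv_sub_inv_card_le _ _ hε (sum_convPow hsum N) (sum_convPow hsum _) ih g

theorem tendsto_convPow_of_forall_pos {N : ℕ} (hN : 0 < N) (hpos : ∀ g, 0 < convPow μ N g)
    (g : G) : Tendsto (fun n => convPow μ n g) atTop (𝓝 (Fintype.card G : ℝ)⁻¹) := by
  obtain ⟨h₀, -, hmin⟩ := Finset.univ.exists_min_image (convPow μ N) Finset.univ_nonempty
  set r := 1 - Fintype.card G * convPow μ N h₀
  have hr0 : 0 ≤ r := by
    have := Finset.card_nsmul_le_sum Finset.univ (convPow μ N) _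
      fun h _ => hmin h (Finset.mem_univ h)
    rw [sum_convPow hsum, Finset.card_univ, nsmul_eq_mul] at this
    linarith
  have hr1 : r < 1 := by
    have : 0 < (Fintype.card G : ℝ) * convPow μ N h₀ := by
      have := hpos h₀
      positivity
    linarith
  have hbound (n : ℕ) : |convPow μ n g - (Fintype.card G : ℝ)⁻¹| ≤ r ^ (n / N) := by
    simpa [Nat.div_add_mod] using abs_convPow_sub_inv_card_le_pow hμ hsum
      (fun h => hmin h (Finset.mem_univ h)) (n / N) (n % N) g
  have hlim : Tendsto (fun n => r ^ (n / N)) atTop (𝓝 0) :=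
    (tendsto_pow_atTop_nhds_zero_of_lt_one hr0 hr1).comp (Nat.tendsto_div_const_atTop hN.ne')
  rw [tendsto_iff_norm_sub_tendsto_zero]
  exact squeeze_zero (fun _ => norm_nonneg _) hbound hlim

end Convergence

end RandomWalk

/-- Poincaré card shuffling: if the support of a probability measure `μ` on a finite
group `G` generates `G` and is not contained in a coset of a proper normal subgroup,
then the convolution powers `μ^{*n}` converge to the uniform distribution on `G`. -/
theorem random_walk_on_group_converges_to_uniform
    {G : Type*} [Group G] [Fintype G] [DecidableEq G]
    (μ : G → ℝ) (hnonneg : ∀ g, 0 ≤ μ g) (hsum : ∑ g, μ g = 1)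
    (hgen : Subgroup.closure (Function.support μ) = ⊤)
    (hcoset : ¬ ∃ (H : Subgroup G), H.Normal ∧ H ≠ ⊤ ∧
      ∃ g : G, Function.support μ ⊆ (fun h => g * h) '' (H : Set G)) :
    ∀ g : G, Tendsto (fun n : ℕ => convPow μ n g) atTop
      (𝓝 (1 / (Fintype.card G : ℝ))) := by
  have hreach := exists_convPow_pos hnonneg hgen
  have hsupp : (Function.support μ).Nonempty :=
    Function.support_nonempty_iff.2 fun h => by simp [h] at hsum
  have hperiod := period_eq_one hnonneg hreach hsupp hcoset
  obtain ⟨N, hpos, hN⟩ :=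
    ((eventually_forall_convPow_pos hnonneg hreach hperiod).and (eventually_gt_atTop 0)).exists
  intro g
  rw [one_div]
  exact tendsto_convPow_of_forall_pos hnonneg hsum hN hpos g
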